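/- Let A be a finite alphabet, u ∈ A^ℕ an infinite word, and φ: A* → A* a morphism in Class P_ret with marker w such that the last letters of the words φ(c), c ∈ A, are not all equal and the map sending each letter c to the last letter of φ(c) is injective. If v is a bispecial factor of φ(u) which contains w as a factor, then there exists a bispecial factor x of u such that v = φ(x)w. -/

import Mathlib

open List

/-- Apply a morphism (given by its values on letters) to a finite word. -/
def applyM {A : Type*} (φ : A → List A) (v : List A) : List A := v.flatMap φ

/-- The set of occurrences of `w` as a factor of `u`:
indices `i` such that the block of `u` of length `|w|` starting at `i` equals `w`. -/
def occs {A : Type*} [DecidableEq A] (w u : List A) : Finset ℕ :=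
  (Finset.range (u.length + 1)).filter
    (fun i => i + w.length ≤ u.length ∧ (u.drop i).take w.length = w)

/-- A morphism `φ` belongs to Class `P_ret` with marker `w` if it is injective on
letters, `w` is a palindrome, and for each letter `a` the word `φ(a)w` is a palindrome
in which `w` occurs exactly twice, namely as a prefix (position `0`) and as a suffix
(position `|φ(a)|`, distinct from `0`). -/
def IsPretWithMarker {A : Type*} [DecidableEq A] (φ : A → List A) (w : List A) : Prop :=
  Function.Injective φ ∧ w.reverse = w ∧
    ∀ a : A, (φ a ++ w).reverse = φ a ++ w ∧
      occs w (φ a ++ w) = {0, (φ a).length} ∧ (φ a).length ≠ 0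

/-- The block of length `len` of the infinite word `u` starting at position `i`. -/
def factorAt {A : Type*} (u : ℕ → A) (i len : ℕ) : List A :=
  (List.range len).map fun k => u (i + k)

/-- `i` is an occurrence of the finite word `v` in the infinite word `u`. -/
def OccursAt {A : Type*} (u : ℕ → A) (v : List A) (i : ℕ) : Prop :=
  factorAt u i v.length = v

/-- `v` belongs to the language of the infinite word `u`, i.e. `v` is a factor of `u`. -/
def InLang {A : Type*} (u : ℕ → A) (v : List A) : Prop := ∃ i, OccursAt u v i

/-- The image `φ(u) = φ(u₀)φ(u₁)φ(u₂)⋯` of an infinite word `u` under a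
(non-erasing) morphism `φ`, as an infinite word. -/
def applyInf {A : Type*} (φ : A → List A) (u : ℕ → A) (n : ℕ) : A :=
  (((List.range (n + 1)).flatMap fun i => φ (u i))).getD n (u 0)

/-- The language of `u` is closed under reversal. -/
def ClosedUnderReversal {A : Type*} (u : ℕ → A) : Prop :=
  ∀ v : List A, InLang u v → InLang u v.reverse

/-- A finite word is rich if its number of palindromic factors (including `ε`)
equals its length plus one. -/
def RichWord {A : Type*} (u : List A) : Prop :=
  {p : List A | p <:+: u ∧ p.reverse = p}.ncard = u.length + 1

/-- An infinite word is rich if all its finite prefixes are rich. -/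
def RichInf {A : Type*} (u : ℕ → A) : Prop := ∀ n : ℕ, RichWord (factorAt u 0 n)

/-- An infinite word is recurrent if each of its factors occurs infinitely often. -/
def Recurrent {A : Type*} (u : ℕ → A) : Prop :=
  ∀ v : List A, InLang u v → ∀ N : ℕ, ∃ i, N ≤ i ∧ OccursAt u v i

/-- `r` is a return word to `w` in the infinite word `u`: `wr ∈ L(u)` and `w`
occurs in `wr` exactly twice, as a prefix and as a suffix. -/
def IsReturnWord {A : Type*} [DecidableEq A] (u : ℕ → A) (w r : List A) : Prop :=
  r ≠ [] ∧ InLang u (w ++ r) ∧ occs w (w ++ r) = {0, r.length}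

/-- Left extensions of `x` in the language of `u`. -/
def leftExt {A : Type*} (u : ℕ → A) (x : List A) : Set A := {a | InLang u (a :: x)}

/-- Right extensions of `x` in the language of `u`. -/
def rightExt {A : Type*} (u : ℕ → A) (x : List A) : Set A := {b | InLang u (x ++ [b])}

/-- Bi-extensions of `x` in the language of `u`. -/
def biExt {A : Type*} (u : ℕ → A) (x : List A) : Set (A × A) :=
  {p | InLang u (p.1 :: (x ++ [p.2]))}

/-- `x` is bispecial in `u`. -/
def Bispecial {A : Type*} (u : ℕ → A) (x : List A) : Prop :=
  2 ≤ (leftExt u x).ncard ∧ 2 ≤ (rightExt u x).ncard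

/-- The bilateral order `b_u(x) = #B_u(x) − #L_u(x) − #R_u(x) + 1`. -/
noncomputable def bilateralOrder {A : Type*} (u : ℕ → A) (x : List A) : ℤ :=
  ((biExt u x).ncard : ℤ) - (leftExt u x).ncard - (rightExt u x).ncard + 1

/-- The number of palindromic extensions of `x` in `u`. -/
noncomputable def pext {A : Type*} (u : ℕ → A) (x : List A) : ℕ :=
  {a | InLang u (a :: (x ++ [a]))}.ncard

/-- Arnoux-Rauzy morphisms: the monoid of morphisms generated by permutations of the
alphabet and by the elementary morphisms `ψ_a : a ↦ a, b ↦ ab` and `ψ̄_a : a ↦ a, b ↦ ba`. -/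
inductive IsAR {A : Type*} [DecidableEq A] : (A → List A) → Prop
  | perm (π : Equiv.Perm A) : IsAR (fun a => [π a])
  | psiL (a : A) : IsAR (fun b => if b = a then [a] else [a, b])
  | psiR (a : A) : IsAR (fun b => if b = a then [a] else [b, a])
  | comp {φ ψ : A → List A} : IsAR φ → IsAR ψ → IsAR (fun a => applyM φ (ψ a))

/-- The `k`-th power `φ^k` of a morphism. -/
def powM {A : Type*} (φ : A → List A) : ℕ → A → List A
  | 0, a => [a]
  | n + 1, a => applyM (powM φ n) (φ a)

/-- A morphism is primitive if some power of it maps every letter to a word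
containing every letter. -/
def PrimitiveM {A : Type*} (φ : A → List A) : Prop :=
  ∃ k : ℕ, ∀ a b : A, b ∈ powM φ k a

/-- A (acyclic) morphism is marked: it has a rightmost conjugate `φR` whose
last-letter map is injective, and a leftmost conjugate `φL` whose first-letter map
is injective. -/
def Marked {A : Type*} (φ : A → List A) : Prop :=
  ∃ (φR φL : A → List A) (x y : List A),
    (∀ a, φ a ++ x = x ++ φR a) ∧
    (∀ a, φL a ++ y = y ++ φ a) ∧
    (∃ a b : A, (φR a).getLast? ≠ (φR b).getLast?) ∧
    (∃ a b : A, (φL a).head? ≠ (φL b).head?) ∧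
    Function.Injective (fun c => (φR c).getLast?) ∧
    Function.Injective (fun c => (φL c).head?)

/-!
Write `U = φ(u)` and `B k = |φ(u₀ ⋯ u_{k-1})|`. Because `w` occurs in `φ(a)w` only as a prefix and
as a suffix, the occurrences of `w` in `U` are exactly the positions `B k`.

Let `v = s w t` with `s` shortest. If `s ≠ ε`, this `w` sits at some `B (k+1)` while `B k` lies
before the start of `v` (otherwise it would give an earlier `w`), so for every left extension `a`
the word `a s` is a suffix of `φ(u k)`. The last letter of `s` is `ρ(u k)`, which fixes `u k` and
hence `a`: `v` has a single left extension. Symmetrically, since `φ(c)w = w · reverse φ(c)`, a right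
special `v` ends with `w`. So `v = φ(x)w`, the occurrences of `φ(x)w` in `U` are the `B m` with `x`
occurring at `m` in `u`, and the letters of `U` just before `B m` and just after `B n + |w|` are
`ρ(u (m-1))` and `ρ(u n)`; thus the extensions of `v` are the images under `ρ` of those of `x`.
-/

section Factors

variable {A : Type*}

@[simp] theorem factorAt_length (u : ℕ → A) (i n : ℕ) : (factorAt u i n).length = n := by
  simp [factorAt]

theorem factorAt_add (u : ℕ → A) (i m n : ℕ) :
    factorAt u i (m + n) = factorAt u i m ++ factorAt u (i + m) n := by
  simp [factorAt, List.range_add, Nat.add_assoc]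

theorem occursAt_factorAt (u : ℕ → A) (i n : ℕ) : OccursAt u (factorAt u i n) i := by
  rw [OccursAt, factorAt_length]

theorem occursAt_append_iff {u : ℕ → A} {s t : List A} {i : ℕ} :
    OccursAt u (s ++ t) i ↔ OccursAt u s i ∧ OccursAt u t (i + s.length) := by
  unfold OccursAt
  rw [List.length_append, factorAt_add]
  constructor
  · intro hst
    exact List.append_inj hst (factorAt_length ..)
  · rintro ⟨hs, ht⟩
    rw [hs, ht]

theorem occursAt_singleton_iff {u : ℕ → A} {a : A} {i : ℕ} : OccursAt u [a] i ↔ u i = a := by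
  simp [OccursAt, factorAt]

theorem occursAt_cons_iff {u : ℕ → A} {a : A} {t : List A} {i : ℕ} :
    OccursAt u (a :: t) i ↔ u i = a ∧ OccursAt u t (i + 1) := by
  rw [← List.singleton_append, occursAt_append_iff, occursAt_singleton_iff, List.length_singleton]

theorem OccursAt.eq_of_length_eq {u : ℕ → A} {s t : List A} {i : ℕ} (hs : OccursAt u s i)
    (ht : OccursAt u t i) (hst : s.length = t.length) : s = t := by
  rw [← hs, ← ht, hst]

theorem OccursAt.exists_eq_append {u : ℕ → A} {v w : List A} {i j : ℕ} (hv : OccursAt u v i)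
    (hw : OccursAt u w j) (hij : i ≤ j) (hj : j + w.length ≤ i + v.length) :
    ∃ s t, v = s ++ w ++ t ∧ s.length = j - i := by
  set r := i + v.length - (j + w.length)
  refine ⟨factorAt u i (j - i), factorAt u (j + w.length) r, ?_, by simp⟩
  have hsplit : factorAt u i v.length =
      factorAt u i (j - i) ++ factorAt u (i + (j - i)) w.length
        ++ factorAt u (i + (j - i + w.length)) r := by
    rw [← factorAt_add, ← factorAt_add]
    congr 1
    omega
  rwa [show i + (j - i) = j by omega, show i + (j - i + w.length) = j + w.length by omega, hw,
    hv] at hsplit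

theorem OccursAt.isPrefix {u : ℕ → A} {s t : List A} {i : ℕ} (hs : OccursAt u s i)
    (ht : OccursAt u t i) (hlen : t.length ≤ s.length) : t <+: s := by
  obtain ⟨r, r', rfl, hr⟩ := hs.exists_eq_append ht le_rfl (by omega)
  rw [List.length_eq_zero_iff.1 (by omega : r.length = 0)]
  exact List.prefix_append _ _

theorem OccursAt.isSuffix {u : ℕ → A} {s t : List A} {i j : ℕ} (hs : OccursAt u s i)
    (ht : OccursAt u t j) (hij : i ≤ j) (hend : j + t.length = i + s.length) : t <:+ s := by
  obtain ⟨r, r', rfl, hr⟩ := hs.exists_eq_append ht hij hend.le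
  simp only [List.length_append] at hend
  rw [List.length_eq_zero_iff.1 (by omega : r'.length = 0), List.append_nil]
  exact List.suffix_append _ _

variable [DecidableEq A]

theorem mem_occs_iff {w v : List A} {q : ℕ} :
    q ∈ occs w v ↔ ∃ s t, v = s ++ w ++ t ∧ s.length = q := by
  simp only [occs, Finset.mem_filter, Finset.mem_range]
  constructor
  · rintro ⟨-, hlen, hw⟩
    refine ⟨v.take q, v.drop (q + w.length), ?_, by simp; omega⟩
    conv_lhs => rw [← List.take_append_drop q v, ← List.take_append_drop w.length (v.drop q)]
    rw [hw, List.drop_drop, List.append_assoc]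
  · rintro ⟨s, t, rfl, rfl⟩
    simp only [List.length_append, List.append_assoc, List.drop_left, List.take_left, and_true]
    omega

theorem occs_nonempty_of_infix {w v : List A} (hw : w <:+: v) : (occs w v).Nonempty := by
  obtain ⟨s, t, hst⟩ := hw
  exact ⟨s.length, mem_occs_iff.2 ⟨s, t, hst.symm, rfl⟩⟩

theorem OccursAt.mem_occs {u : ℕ → A} {v w : List A} {i j : ℕ} (hv : OccursAt u v i)
    (hw : OccursAt u w j) (hij : i ≤ j) (hj : j + w.length ≤ i + v.length) :
    j - i ∈ occs w v :=
  mem_occs_iff.2 (hv.exists_eq_append hw hij hj)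

theorem OccursAt.of_mem_occs {u : ℕ → A} {v w : List A} {i q : ℕ} (hv : OccursAt u v i)
    (hq : q ∈ occs w v) : OccursAt u w (i + q) := by
  obtain ⟨s, t, rfl, rfl⟩ := mem_occs_iff.1 hq
  exact (occursAt_append_iff.1 (occursAt_append_iff.1 hv).1).2

end Factors

section Morphism

variable {A : Type*} {φ : A → List A} {u : ℕ → A}

@[simp] theorem factorAt_one (u : ℕ → A) (i : ℕ) : factorAt u i 1 = [u i] := by
  simp [factorAt]

@[simp] theorem factorAt_getElem (u : ℕ → A) (i n j : ℕ) (hj : j < (factorAt u i n).length) :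
    (factorAt u i n)[j] = u (i + j) := by
  simp [factorAt]

@[simp] theorem applyM_nil (φ : A → List A) : applyM φ [] = [] := rfl

@[simp] theorem applyM_cons (φ : A → List A) (a : A) (x : List A) :
    applyM φ (a :: x) = φ a ++ applyM φ x := rfl

@[simp] theorem applyM_append (φ : A → List A) (x y : List A) :
    applyM φ (x ++ y) = applyM φ x ++ applyM φ y := by
  simp [applyM]

theorem length_le_length_applyM (hφ : ∀ a, φ a ≠ []) (z : List A) :
    z.length ≤ (applyM φ z).length := by
  induction z with
  | nil => simp
  | cons a z ih =>
    have := List.length_pos_iff.2 (hφ a)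
    simp only [List.length_cons, applyM_cons, List.length_append]
    omega

theorem applyM_injective {ρ : A → A} (hρ : ∀ c, (φ c).getLast? = some (ρ c))
    (hinj : Function.Injective ρ) : Function.Injective (applyM φ) := by
  have hφ : ∀ c, φ c ≠ [] := fun c hc => by simpa [hc] using hρ c
  intro x
  induction x using List.reverseRecOn with
  | nil =>
    intro y hy
    cases y using List.reverseRecOn with
    | nil => rfl
    | append_singleton y d _ => simp [hφ d] at hy
  | append_singleton x c ih =>
    intro y hy
    cases y using List.reverseRecOn with
    | nil => simp [hφ c] at hy
    | append_singleton y d _ =>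
      simp only [applyM_append, applyM_cons, applyM_nil, List.append_nil] at hy
      obtain rfl : c = d :=
        hinj (by simpa [List.getLast?_append, hρ] using congrArg List.getLast? hy)
      rw [ih (List.append_cancel_right hy)]

variable (φ u) in
def boundary (k : ℕ) : ℕ := (applyM φ (factorAt u 0 k)).length

@[simp] theorem boundary_zero : boundary φ u 0 = 0 := by
  simp [boundary, factorAt]

theorem boundary_add (m n : ℕ) :
    boundary φ u (m + n) = boundary φ u m + (applyM φ (factorAt u m n)).length := by
  simp [boundary, factorAt_add]

theorem boundary_strictMono (hφ : ∀ a, φ a ≠ []) : StrictMono (boundary φ u) :=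
  strictMono_nat_of_lt_succ fun m => by
    simpa [boundary_add, List.length_pos_iff] using hφ (u m)

theorem applyInf_eq_getElem (hφ : ∀ a, φ a ≠ []) {n k : ℕ} (hn : n < boundary φ u k) :
    applyInf φ u n = (applyM φ (factorAt u 0 k))[n] := by
  have hrange :
      applyM φ (factorAt u 0 (n + 1)) = (List.range (n + 1)).flatMap fun i => φ (u i) := by
    simp [applyM, factorAt, List.flatMap_map]
  have hprefix : ∀ {k k' : ℕ}, k ≤ k' →
      applyM φ (factorAt u 0 k) <+: applyM φ (factorAt u 0 k') := by
    intro k k' hk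
    obtain ⟨d, rfl⟩ := Nat.exists_eq_add_of_le hk
    rw [factorAt_add, applyM_append]
    exact List.prefix_append _ _
  have hlt : n < boundary φ u (n + 1) := (boundary_strictMono hφ).id_le (n + 1)
  rw [applyInf, ← hrange, List.getD_eq_getElem _ _ hlt]
  rcases le_total k (n + 1) with hk | hk
  · exact ((hprefix hk).getElem hn).symm
  · exact (hprefix hk).getElem hlt

theorem occursAt_applyInf_boundary (hφ : ∀ a, φ a ≠ []) (m n : ℕ) :
    OccursAt (applyInf φ u) (applyM φ (factorAt u m n)) (boundary φ u m) := by
  have hprefix : OccursAt (applyInf φ u) (applyM φ (factorAt u 0 (m + n))) 0 := by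
    unfold OccursAt
    refine List.ext_getElem (by simp) fun j hj _ => ?_
    rw [factorAt_length] at hj
    rw [factorAt_getElem, zero_add]
    exact applyInf_eq_getElem hφ hj
  rw [factorAt_add, applyM_append, occursAt_append_iff] at hprefix
  simpa [boundary] using hprefix.2

theorem applyInf_eq_of_add_one_eq_boundary {ρ : A → A} (hρ : ∀ c, (φ c).getLast? = some (ρ c))
    {p m : ℕ} (hp : p + 1 = boundary φ u (m + 1)) : applyInf φ u p = ρ (u m) := by
  have hφ : ∀ c, φ c ≠ [] := fun c hc => by simpa [hc] using hρ c
  obtain ⟨t, ht⟩ := List.getLast?_eq_some_iff.1 (hρ (u m))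
  have hocc := occursAt_applyInf_boundary hφ (u := u) m 1
  simp only [factorAt_one, applyM_cons, applyM_nil, List.append_nil, ht] at hocc
  simp only [boundary_add, factorAt_one, applyM_cons, applyM_nil, List.append_nil, ht,
    List.length_append, List.length_singleton] at hp
  rw [← occursAt_singleton_iff, show p = boundary φ u m + t.length by omega]
  exact (occursAt_append_iff.1 hocc).2

end Morphism

namespace IsPretWithMarker

variable {A : Type*} [DecidableEq A] {φ : A → List A} {w : List A} {u : ℕ → A}

theorem ne_nil (h : IsPretWithMarker φ w) (a : A) : φ a ≠ [] :=
  List.ne_nil_of_length_pos (Nat.pos_of_ne_zero (h.2.2 a).2.2)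

theorem append_marker_eq (h : IsPretWithMarker φ w) (a : A) :
    φ a ++ w = w ++ (φ a).reverse := by
  conv_lhs => rw [← (h.2.2 a).1]
  rw [List.reverse_append, h.2.1]

theorem prefix_applyM_append (h : IsPretWithMarker φ w) (z : List A) :
    w <+: applyM φ z ++ w := by
  induction z with
  | nil => simp
  | cons a z ih =>
    obtain ⟨t, ht⟩ := ih
    rw [applyM_cons, List.append_assoc, ← ht, ← List.append_assoc, h.append_marker_eq,
      List.append_assoc]
    exact List.prefix_append _ _

theorem occursAt_boundary (h : IsPretWithMarker φ w) (k : ℕ) :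
    OccursAt (applyInf φ u) w (boundary φ u k) := by
  have hz := occursAt_applyInf_boundary h.ne_nil (u := u) k w.length
  have hlen := length_le_length_applyM h.ne_nil (factorAt u k w.length)
  rw [factorAt_length] at hlen
  obtain ⟨t, ht⟩ := List.prefix_of_prefix_length_le (h.prefix_applyM_append _)
    (List.prefix_append _ _) hlen
  rw [← ht] at hz
  exact (occursAt_append_iff.1 hz).1

theorem occursAt_applyM_append (h : IsPretWithMarker φ w) {x : List A} {m : ℕ}
    (hx : OccursAt u x m) : OccursAt (applyInf φ u) (applyM φ x ++ w) (boundary φ u m) := by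
  obtain ⟨n, rfl⟩ : ∃ n, factorAt u m n = x := ⟨_, hx⟩
  refine occursAt_append_iff.2 ⟨occursAt_applyInf_boundary h.ne_nil m n, ?_⟩
  rw [← boundary_add]
  exact h.occursAt_boundary (m + n)

theorem exists_applyM_prefix_of_append_eq (h : IsPretWithMarker φ w) :
    ∀ {z s t : List A}, applyM φ z ++ w = s ++ w ++ t → ∃ z', z' <+: z ∧ s = applyM φ z'
  | [], s, t, hz => by
    have hlen := congrArg List.length hz
    simp only [applyM_nil, List.nil_append, List.length_append] at hlen
    exact ⟨[], List.nil_prefix, List.length_eq_zero_iff.1 (by omega)⟩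
  | a :: z, s, t, hz => by
    rw [applyM_cons, List.append_assoc] at hz
    by_cases hs : s.length < (φ a).length
    · obtain ⟨t', ht'⟩ : s ++ w <+: φ a ++ w :=
        List.prefix_of_prefix_length_le ⟨t, hz.symm⟩
          ((List.prefix_append_right_inj (φ a)).2 (h.prefix_applyM_append z))
          (by simp only [List.length_append]; omega)
      have hocc : s.length ∈ occs w (φ a ++ w) := mem_occs_iff.2 ⟨s, t', ht'.symm, rfl⟩
      rw [(h.2.2 a).2.1, Finset.mem_insert, Finset.mem_singleton] at hocc
      exact ⟨[], List.nil_prefix, List.length_eq_zero_iff.1 (by omega)⟩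
    · obtain ⟨s', rfl⟩ : φ a <+: s :=
        List.prefix_of_prefix_length_le (List.prefix_append _ _)
          ⟨w ++ t, by rw [hz, List.append_assoc]⟩ (by omega)
      rw [List.append_assoc, List.append_assoc, List.append_cancel_left_eq,
        ← List.append_assoc] at hz
      obtain ⟨z', hz', rfl⟩ := h.exists_applyM_prefix_of_append_eq hz
      exact ⟨a :: z', List.cons_prefix_cons.2 ⟨rfl, hz'⟩, rfl⟩

theorem exists_boundary_of_occursAt (h : IsPretWithMarker φ w) {p : ℕ}
    (hp : OccursAt (applyInf φ u) w p) : ∃ k, p = boundary φ u k := by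
  have hz := h.occursAt_applyM_append (occursAt_factorAt u 0 (p + w.length))
  have hlen := length_le_length_applyM h.ne_nil (factorAt u 0 (p + w.length))
  rw [boundary_zero] at hz
  rw [factorAt_length] at hlen
  obtain ⟨s, t, hst, hs⟩ :=
    hz.exists_eq_append hp (Nat.zero_le p) (by simp only [List.length_append]; omega)
  obtain ⟨z', ⟨r, hr⟩, rfl⟩ := h.exists_applyM_prefix_of_append_eq hst
  have hz' : OccursAt u z' 0 := (occursAt_append_iff.1 (hr ▸ occursAt_factorAt u 0 _)).1
  exact ⟨z'.length, by rw [boundary, hz', hs, Nat.sub_zero]⟩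

theorem applyInf_boundary_add_length (h : IsPretWithMarker φ w) {ρ : A → A}
    (hρ : ∀ c, (φ c).getLast? = some (ρ c)) (m : ℕ) :
    applyInf φ u (boundary φ u m + w.length) = ρ (u m) := by
  obtain ⟨t, ht⟩ := List.getLast?_eq_some_iff.1 (hρ (u m))
  have hocc := h.occursAt_applyM_append (occursAt_factorAt u m 1)
  rw [factorAt_one, applyM_cons, applyM_nil, List.append_nil, h.append_marker_eq, ht,
    List.reverse_append, List.reverse_singleton, List.singleton_append] at hocc
  exact (occursAt_cons_iff.1 (occursAt_append_iff.1 hocc).2).1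

theorem exists_eq_applyM_append (h : IsPretWithMarker φ w) {v : List A} {i : ℕ}
    (hv : OccursAt (applyInf φ u) v i) (hpre : w <+: v) (hsuf : w <:+ v) :
    ∃ m x, i = boundary φ u m ∧ OccursAt u x m ∧ v = applyM φ x ++ w := by
  have hw : OccursAt (applyInf φ u) w i := by
    obtain ⟨r, rfl⟩ := hpre
    exact (occursAt_append_iff.1 hv).1
  obtain ⟨y, rfl⟩ := hsuf
  obtain ⟨m, rfl⟩ := h.exists_boundary_of_occursAt hw
  obtain ⟨n, hn⟩ := h.exists_boundary_of_occursAt (occursAt_append_iff.1 hv).2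
  obtain ⟨d, rfl⟩ : ∃ d, n = m + d :=
    Nat.exists_eq_add_of_le ((boundary_strictMono (u := u) h.ne_nil).le_iff_le.1 (by omega))
  refine ⟨m, factorAt u m d, rfl, occursAt_factorAt u m d, ?_⟩
  rw [boundary_add] at hn
  exact hv.eq_of_length_eq (h.occursAt_applyM_append (occursAt_factorAt u m d))
    (by simp only [List.length_append]; omega)

theorem occursAt_applyM_append_iff (h : IsPretWithMarker φ w) {ρ : A → A}
    (hρ : ∀ c, (φ c).getLast? = some (ρ c)) (hinj : Function.Injective ρ) {x : List A} {i : ℕ} :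
    OccursAt (applyInf φ u) (applyM φ x ++ w) i ↔ ∃ m, i = boundary φ u m ∧ OccursAt u x m := by
  constructor
  · intro hx
    obtain ⟨m, x', rfl, hx', he⟩ :=
      h.exists_eq_applyM_append hx (h.prefix_applyM_append x) (List.suffix_append _ _)
    exact ⟨m, rfl, applyM_injective hρ hinj (List.append_cancel_right he) ▸ hx'⟩
  · rintro ⟨m, rfl, hx⟩
    exact h.occursAt_applyM_append hx

theorem leftExt_applyM_append (h : IsPretWithMarker φ w) {ρ : A → A}
    (hρ : ∀ c, (φ c).getLast? = some (ρ c)) (hinj : Function.Injective ρ) (x : List A) :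
    leftExt (applyInf φ u) (applyM φ x ++ w) = ρ '' leftExt u x := by
  ext a
  constructor
  · rintro ⟨p, hp⟩
    obtain ⟨rfl, hv⟩ := occursAt_cons_iff.1 hp
    obtain ⟨m, hm, hx⟩ := (h.occursAt_applyM_append_iff hρ hinj).1 hv
    obtain ⟨m, rfl⟩ : ∃ m', m = m' + 1 :=
      Nat.exists_eq_succ_of_ne_zero (by rintro rfl; simp at hm)
    exact ⟨u m, ⟨m, occursAt_cons_iff.2 ⟨rfl, hx⟩⟩,
      (applyInf_eq_of_add_one_eq_boundary hρ hm).symm⟩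
  · rintro ⟨c, ⟨k, hk⟩, rfl⟩
    obtain ⟨t, ht⟩ := List.getLast?_eq_some_iff.1 (hρ c)
    have hocc := h.occursAt_applyM_append hk
    rw [applyM_cons, ht, List.append_assoc, List.append_assoc, List.singleton_append] at hocc
    exact ⟨_, (occursAt_append_iff.1 hocc).2⟩

theorem rightExt_applyM_append (h : IsPretWithMarker φ w) {ρ : A → A}
    (hρ : ∀ c, (φ c).getLast? = some (ρ c)) (hinj : Function.Injective ρ) (x : List A) :
    rightExt (applyInf φ u) (applyM φ x ++ w) = ρ '' rightExt u x := by
  ext b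
  constructor
  · rintro ⟨p, hp⟩
    obtain ⟨hv, hb⟩ := occursAt_append_iff.1 hp
    obtain ⟨m, rfl, hx⟩ := (h.occursAt_applyM_append_iff hρ hinj).1 hv
    refine ⟨u (m + x.length), ⟨m, occursAt_append_iff.2 ⟨hx, occursAt_singleton_iff.2 rfl⟩⟩, ?_⟩
    rw [occursAt_singleton_iff, List.length_append, ← Nat.add_assoc] at hb
    rw [← hb, ← h.applyInf_boundary_add_length hρ, boundary_add, hx]
  · rintro ⟨c, ⟨k, hk⟩, rfl⟩
    obtain ⟨t, ht⟩ := List.getLast?_eq_some_iff.1 (hρ c)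
    have hocc := h.occursAt_applyM_append hk
    rw [applyM_append, applyM_cons, applyM_nil, List.append_nil, List.append_assoc,
      h.append_marker_eq, ht, List.reverse_append, List.reverse_singleton,
      List.singleton_append, ← List.append_assoc, ← List.singleton_append,
      ← List.append_assoc] at hocc
    exact ⟨_, (occursAt_append_iff.1 hocc).1⟩

theorem exists_cons_suffix_of_mem_leftExt (h : IsPretWithMarker φ w) {v s t : List A} {a : A}
    (hv : v = s ++ w ++ t) (hmin : ∀ q ∈ occs w v, s.length ≤ q)
    (ha : a ∈ leftExt (applyInf φ u) v) : ∃ c, a :: s <:+ φ c := by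
  obtain ⟨p, hp⟩ := ha
  have hpv := (occursAt_cons_iff.1 hp).2
  obtain ⟨k, hk⟩ := h.exists_boundary_of_occursAt (hpv.of_mem_occs (mem_occs_iff.2 ⟨s, t, hv, rfl⟩))
  obtain ⟨k, rfl⟩ : ∃ k', k = k' + 1 := Nat.exists_eq_succ_of_ne_zero (by rintro rfl; simp at hk)
  have hlt := boundary_strictMono (u := u) h.ne_nil (Nat.lt_add_one k)
  have hvlen : s.length + w.length ≤ v.length := by simp [hv]
  have hle : boundary φ u k ≤ p := by
    by_contra hgt
    have := hmin _ (hpv.mem_occs (h.occursAt_boundary k) (by omega) (by omega))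
    omega
  have has : OccursAt (applyInf φ u) (a :: s) p := by
    rw [hv, List.append_assoc, ← List.cons_append] at hp
    exact (occursAt_append_iff.1 hp).1
  have hend := boundary_add (φ := φ) (u := u) k 1
  simp only [factorAt_one, applyM_cons, applyM_nil, List.append_nil] at hend
  refine ⟨u k, ?_⟩
  simpa using (occursAt_applyInf_boundary h.ne_nil k 1).isSuffix has hle (by simp; omega)

theorem exists_prefix_of_mem_rightExt (h : IsPretWithMarker φ w) {v s t : List A} {b : A}
    (hv : v = s ++ w ++ t) (hmax : ∀ q ∈ occs w v, q ≤ s.length)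
    (hb : b ∈ rightExt (applyInf φ u) v) : ∃ c, w ++ t ++ [b] <+: φ c ++ w := by
  obtain ⟨p, hp⟩ := hb
  have hpv := (occursAt_append_iff.1 hp).1
  obtain ⟨k, hk⟩ := h.exists_boundary_of_occursAt (hpv.of_mem_occs (mem_occs_iff.2 ⟨s, t, hv, rfl⟩))
  have hlt := boundary_strictMono (u := u) h.ne_nil (Nat.lt_add_one k)
  have hvlen : v.length = s.length + w.length + t.length := by simp [hv, Nat.add_assoc]
  have hend : p + v.length < boundary φ u (k + 1) + w.length := by
    by_contra hge
    have := hmax _ (hpv.mem_occs (h.occursAt_boundary (k + 1)) (by omega) (by omega))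
    omega
  have hwt : OccursAt (applyInf φ u) (w ++ t ++ [b]) (boundary φ u k) := by
    rw [hv, List.append_assoc, List.append_assoc, occursAt_append_iff, hk] at hp
    simpa using hp.2
  have hsucc := boundary_add (φ := φ) (u := u) k 1
  simp only [factorAt_one, applyM_cons, applyM_nil, List.append_nil] at hsucc
  refine ⟨u k, ?_⟩
  simpa using (h.occursAt_applyM_append (occursAt_factorAt u k 1)).isPrefix hwt (by simp; omega)

theorem prefix_of_two_le_ncard_leftExt (h : IsPretWithMarker φ w) {ρ : A → A}
    (hρ : ∀ c, (φ c).getLast? = some (ρ c)) (hinj : Function.Injective ρ) {v : List A}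
    (hl : 2 ≤ (leftExt (applyInf φ u) v).ncard) (hw : w <:+: v) : w <+: v := by
  have hne := occs_nonempty_of_infix hw
  obtain ⟨s, t, hv, hs⟩ := mem_occs_iff.1 ((occs w v).min'_mem hne)
  have hmin : ∀ q ∈ occs w v, s.length ≤ q := hs ▸ (occs w v).min'_le
  rcases s.eq_nil_or_concat' with rfl | ⟨s, e, rfl⟩
  · exact ⟨t, by simp [hv]⟩
  refine absurd ?_ (Set.one_lt_ncard_iff_nontrivial_and_finite.1 hl).1.not_subsingleton
  have hlast : ∀ {a c}, a :: (s ++ [e]) <:+ φ c → ρ c = e := by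
    rintro a c ⟨r, hr⟩
    have hc : φ c = r ++ a :: s ++ [e] := by simp [← hr]
    have hlast := hρ c
    rw [hc, List.getLast?_concat] at hlast
    exact (Option.some.inj hlast).symm
  intro a₁ ha₁ a₂ ha₂
  obtain ⟨c₁, hc₁⟩ := h.exists_cons_suffix_of_mem_leftExt hv hmin ha₁
  obtain ⟨c₂, hc₂⟩ := h.exists_cons_suffix_of_mem_leftExt hv hmin ha₂
  obtain rfl : c₁ = c₂ := hinj ((hlast hc₁).trans (hlast hc₂).symm)
  exact (List.cons_eq_cons.1 ((List.suffix_of_suffix_length_le hc₁ hc₂ (by simp)).eq_of_length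
    (by simp))).1

theorem suffix_of_two_le_ncard_rightExt (h : IsPretWithMarker φ w) {ρ : A → A}
    (hρ : ∀ c, (φ c).getLast? = some (ρ c)) (hinj : Function.Injective ρ) {v : List A}
    (hr : 2 ≤ (rightExt (applyInf φ u) v).ncard) (hw : w <:+: v) : w <:+ v := by
  have hne := occs_nonempty_of_infix hw
  obtain ⟨s, t, hv, hs⟩ := mem_occs_iff.1 ((occs w v).max'_mem hne)
  have hmax : ∀ q ∈ occs w v, q ≤ s.length := hs ▸ (occs w v).le_max'
  rcases t with _ | ⟨e, t⟩
  · exact ⟨s, by simp [hv]⟩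
  refine absurd ?_ (Set.one_lt_ncard_iff_nontrivial_and_finite.1 hr).1.not_subsingleton
  have hprefix : ∀ {b}, b ∈ rightExt (applyInf φ u) v → ∃ c, e :: t ++ [b] <+: (φ c).reverse := by
    intro b hb
    obtain ⟨c, hc⟩ := h.exists_prefix_of_mem_rightExt hv hmax hb
    rw [h.append_marker_eq, List.append_assoc] at hc
    exact ⟨c, (List.prefix_append_right_inj w).1 hc⟩
  have hfirst : ∀ {b c}, e :: t ++ [b] <+: (φ c).reverse → ρ c = e := by
    rintro b c ⟨r, hr⟩
    have := congrArg List.head? hr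
    rw [List.head?_reverse, hρ] at this
    simpa using this.symm
  intro b₁ hb₁ b₂ hb₂
  obtain ⟨c₁, hc₁⟩ := hprefix hb₁
  obtain ⟨c₂, hc₂⟩ := hprefix hb₂
  obtain rfl : c₁ = c₂ := hinj ((hfirst hc₁).trans (hfirst hc₂).symm)
  simpa using (List.prefix_of_prefix_length_le hc₁ hc₂ (by simp)).eq_of_length (by simp)

end IsPretWithMarker

theorem pret_marked_bispecial_preimage_general {A : Type*} [DecidableEq A]
    (φ : A → List A) (w : List A) (ρ : A → A) (h : IsPretWithMarker φ w)
    (hρ : ∀ c : A, (φ c).getLast? = some (ρ c))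
    (hinj : Function.Injective ρ)
    (u : ℕ → A) (v : List A)
    (hbs : Bispecial (applyInf φ u) v) (hw : w <:+: v) :
    ∃ x : List A, Bispecial u x ∧ v = applyM φ x ++ w := by
  obtain ⟨_, i, hi⟩ := Set.nonempty_of_ncard_ne_zero
    (s := leftExt (applyInf φ u) v) (by have := hbs.1; omega)
  obtain ⟨-, x, -, -, rfl⟩ := h.exists_eq_applyM_append (occursAt_cons_iff.1 hi).2
    (h.prefix_of_two_le_ncard_leftExt hρ hinj hbs.1 hw)
    (h.suffix_of_two_le_ncard_rightExt hρ hinj hbs.2 hw)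
  refine ⟨x, ?_, rfl⟩
  rwa [Bispecial, h.leftExt_applyM_append hρ hinj, h.rightExt_applyM_append hρ hinj,
    Set.ncard_image_of_injective _ hinj, Set.ncard_image_of_injective _ hinj] at hbs

/-- Let `φ ∈ P_ret` be marked with marker `w` and equal to its rightmost
conjugate. Every bispecial factor `v` of `φ(u)` containing `w` is of the form
`v = φ(x)w` for some bispecial factor `x` of `u`. -/
theorem pret_marked_bispecial_preimage {A : Type*} [Fintype A] [DecidableEq A]
    (φ : A → List A) (w : List A) (ρ : A → A) (h : IsPretWithMarker φ w)
    (hρ : ∀ c : A, (φ c).getLast? = some (ρ c))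
    (hne : ∃ c d : A, ρ c ≠ ρ d)
    (hinj : Function.Injective ρ)
    (u : ℕ → A) (v : List A)
    (hbs : Bispecial (applyInf φ u) v) (hw : w <:+: v) :
    ∃ x : List A, Bispecial u x ∧ v = applyM φ x ++ w :=
  pret_marked_bispecial_preimage_general φ w ρ h hρ hinj u v hbs hw
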